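/- Consider an instance of P_m||C_max with m ≥ 2 machines and exactly n = 2m + 1 jobs with processing times p_1 ≥ p_2 ≥ … ≥ p_n ≥ 0. If an LPT schedule assigns at least three jobs with indices smaller than the critical job j′ to some machine (i.e., some machine receives at least three jobs before j′ is assigned), then C^LPT ≤ (4/3 − 1/(3(m−1))) · C*. -/

import Mathlib

open Finset

/-- Load of machine `i` under schedule `σ` with processing times `p`. -/
def mload {m n : ℕ} (p : Fin n → ℝ) (σ : Fin n → Fin m) (i : Fin m) : ℝ :=
  ∑ j ∈ Finset.univ.filter (fun j => σ j = i), p j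

/-- Makespan of a schedule: the maximum machine load. -/
noncomputable def makespan {m n : ℕ} (p : Fin n → ℝ) (σ : Fin n → Fin m) : ℝ :=
  ⨆ i : Fin m, mload p σ i

/-- Optimal makespan `C*`: minimum makespan over all schedules on `m` machines. -/
noncomputable def optMakespan (m : ℕ) {n : ℕ} (p : Fin n → ℝ) : ℝ :=
  ⨅ σ : Fin n → Fin m, makespan p σ

/-- Processing times are sorted non-increasingly and are nonnegative. -/
def SortedNonneg {n : ℕ} (p : Fin n → ℝ) : Prop :=
  (∀ i j : Fin n, i ≤ j → p j ≤ p i) ∧ ∀ j, 0 ≤ p j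

/-- Load of machine `i` just before job `j` is assigned, when all jobs of `T`
are placed first and the remaining jobs are assigned in index order:
it counts all jobs of `T` on machine `i` plus all jobs of index `< j` on machine `i`. -/
def prefLoad {m n : ℕ} (p : Fin n → ℝ) (σ : Fin n → Fin m) (T : Finset (Fin n))
    (j : Fin n) (i : Fin m) : ℝ :=
  ∑ j' ∈ Finset.univ.filter (fun j' => (j' ∈ T ∨ j' < j) ∧ σ j' = i), p j'

/-- `σ` is a list schedule obtained by first placing all jobs of `T` together on
one machine and then assigning the remaining jobs in index order (i.e. in
non-increasing order of processing time, for sorted `p`), each to a machine of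
minimal current load. -/
def IsLSAfter {m n : ℕ} (p : Fin n → ℝ) (T : Finset (Fin n)) (σ : Fin n → Fin m) : Prop :=
  (∀ j ∈ T, ∀ j' ∈ T, σ j = σ j') ∧
  ∀ j, j ∉ T → ∀ i, prefLoad p σ T j (σ j) ≤ prefLoad p σ T j i

/-- `σ` is an LPT schedule: jobs assigned in order `1,…,n`, each to a machine of
minimal current load. -/
def IsLPT {m n : ℕ} (p : Fin n → ℝ) (σ : Fin n → Fin m) : Prop :=
  IsLSAfter p ∅ σ

/-- `j'` is the critical job of schedule `σ`: it is assigned to a critical machine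
(one whose load equals the makespan), and it is the largest-indexed job assigned
to a critical machine. -/
def IsCriticalJob {m n : ℕ} (p : Fin n → ℝ) (σ : Fin n → Fin m) (j' : Fin n) : Prop :=
  mload p σ (σ j') = makespan p σ ∧
  ∀ j : Fin n, mload p σ (σ j) = makespan p σ → j ≤ j'

/-- The (1-based) position of job `j'` on its machine: the number of jobs of index
`≤ j'` assigned to the same machine as `j'`. -/
def posOn {m n : ℕ} (σ : Fin n → Fin m) (j' : Fin n) : ℕ :=
  (Finset.univ.filter (fun t => σ t = σ j' ∧ t ≤ j')).card

/-- The tuple of the `k` consecutive jobs `j'-k+1, …, j'` (in 1-based terms). -/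
def tupleSet {n : ℕ} (j' : Fin n) (k : ℕ) : Finset (Fin n) :=
  Finset.univ.filter (fun t => t ≤ j' ∧ j'.val < t.val + k)

/-- An LPT′ schedule for critical job `j'`: job `j'` is placed alone on a machine
first, then the remaining jobs are assigned in index order, each to a machine of
minimal current load. -/
def IsLPTprime {m n : ℕ} (p : Fin n → ℝ) (j' : Fin n) (σ' : Fin n → Fin m) : Prop :=
  IsLSAfter p {j'} σ'

/-- An LPT″ schedule for critical job `j'` in position `k`: jobs `j'-k+1,…,j'` are
placed together on one machine first, then the remaining jobs are assigned in
non-increasing order of processing time, each to a machine of minimal current load. -/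
def IsLPTsec {m n : ℕ} (p : Fin n → ℝ) (j' : Fin n) (k : ℕ) (σ'' : Fin n → Fin m) : Prop :=
  IsLSAfter p (tupleSet j' k) σ''


/-!
Let `L` be the load of the critical machine just before `j'` is placed (by the LPT rule, the
minimum of all loads at that moment) and `x = p j'`, so the LPT makespan is `L + x` and every
job `u ≤ j'` has `p u ≥ x`. If some machine is still empty before `j'`, or a job lying alone on
its machine before `j'` shares an optimal machine with another job `u ≤ j'`, then already
`L + x ≤ C*`. Otherwise the `w` lone jobs occupy `w` optimal machines by themselves, and `w ≥ 1`
because only `2m` jobs precede `j'`. The other `c = m - w ≤ m - 1` optimal machines then carry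
`j'` and every job preceding it on a non-lone LPT machine, at least `2c + 2` jobs: one of them
holds three jobs of size `≥ x`, so `3x ≤ C*`, and their total load gives `cL + x ≤ cC*`. Hence
`L + x ≤ C* + x (1 - 1/(m-1)) ≤ C* + C*/3 · (1 - 1/(m-1))`.
-/

section Schedule

variable {m n : ℕ}

theorem mload_le_makespan (p : Fin n → ℝ) (τ : Fin n → Fin m) (M : Fin m) :
    mload p τ M ≤ makespan p τ :=
  le_ciSup (Set.finite_range _).bddAbove M

theorem exists_forall_mload_le_optMakespan [NeZero m] (p : Fin n → ℝ) :
    ∃ τ : Fin n → Fin m, ∀ M, mload p τ M ≤ optMakespan m p := by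
  obtain ⟨τ, hτ⟩ := Finite.exists_min (makespan p : (Fin n → Fin m) → ℝ)
  exact ⟨τ, fun M => (mload_le_makespan p τ M).trans (le_ciInf hτ)⟩

variable {p : Fin n → ℝ} {τ : Fin n → Fin m}

theorem sum_le_mload (hp : ∀ j, 0 ≤ p j) {s : Finset (Fin n)} {M : Fin m}
    (hs : ∀ j ∈ s, τ j = M) : ∑ j ∈ s, p j ≤ mload p τ M :=
  sum_le_sum_of_subset_of_nonneg (fun j hj => mem_filter.2 ⟨mem_univ j, hs j hj⟩)
    fun j _ _ => hp j

variable {C : ℝ}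

theorem le_of_forall_mload_le (hp : ∀ j, 0 ≤ p j) (hC : ∀ M, mload p τ M ≤ C) (j : Fin n) :
    p j ≤ C :=
  calc p j = ∑ k ∈ {j}, p k := (sum_singleton p j).symm
    _ ≤ mload p τ (τ j) := sum_le_mload hp (by simp)
    _ ≤ C := hC _

theorem sum_le_card_mul (hp : ∀ j, 0 ≤ p j) (hC : ∀ M, mload p τ M ≤ C)
    {s : Finset (Fin n)} {B : Finset (Fin m)} (hs : ∀ j ∈ s, τ j ∈ B) :
    ∑ j ∈ s, p j ≤ #B * C := by
  rw [← sum_fiberwise_of_maps_to hs, ← nsmul_eq_mul, ← sum_const]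
  exact sum_le_sum fun M _ => (sum_le_mload hp fun j hj => (mem_filter.1 hj).2).trans (hC M)

theorem three_mul_le_of_mul_two_lt_card (hp : ∀ j, 0 ≤ p j) (hC : ∀ M, mload p τ M ≤ C)
    {s : Finset (Fin n)} {B : Finset (Fin m)} (hs : ∀ j ∈ s, τ j ∈ B) (hcard : #B * 2 < #s)
    {x : ℝ} (hx : ∀ j ∈ s, x ≤ p j) : 3 * x ≤ C := by
  obtain ⟨M, -, hM⟩ := exists_lt_card_fiber_of_mul_lt_card_of_maps_to hs hcard
  obtain ⟨t, hts, ht⟩ := exists_subset_card_eq hM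
  calc 3 * x = #t • x := by rw [ht, nsmul_eq_mul]; norm_num
    _ ≤ ∑ j ∈ t, p j := card_nsmul_le_sum t p x fun j hj => hx j (mem_filter.1 (hts hj)).1
    _ ≤ mload p τ M := sum_le_mload hp fun j hj => (mem_filter.1 (hts hj)).2
    _ ≤ C := hC M

end Schedule

section JobsBefore

variable {m n : ℕ} {p : Fin n → ℝ} {σ : Fin n → Fin m} {j : Fin n}

def jobsBefore (σ : Fin n → Fin m) (j : Fin n) (v : Fin m) : Finset (Fin n) :=
  {t | σ t = v ∧ t < j}

def jobsBeforeOn (σ : Fin n → Fin m) (j : Fin n) (s : Finset (Fin m)) : Finset (Fin n) :=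
  {t | t < j ∧ σ t ∈ s}

theorem sum_jobsBeforeOn {M : Type*} [AddCommMonoid M] (f : Fin n → M) (s : Finset (Fin m)) :
    ∑ t ∈ jobsBeforeOn σ j s, f t = ∑ v ∈ s, ∑ t ∈ jobsBefore σ j v, f t := by
  rw [jobsBeforeOn, ← filter_filter, ← sum_fiberwise_eq_sum_filter]
  refine sum_congr rfl fun v _ => ?_
  rw [jobsBefore, filter_filter]
  simp only [and_comm]

theorem card_jobsBeforeOn (s : Finset (Fin m)) :
    #(jobsBeforeOn σ j s) = ∑ v ∈ s, #(jobsBefore σ j v) := by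
  simpa only [card_eq_sum_ones] using sum_jobsBeforeOn (σ := σ) (j := j) (fun _ => 1) s

theorem sum_card_jobsBefore : ∑ v, #(jobsBefore σ j v) = j.val := by
  rw [← card_jobsBeforeOn, ← Fin.card_Iio]
  congr 1
  ext t
  simp [jobsBeforeOn]

theorem prefLoad_empty (v : Fin m) : prefLoad p σ ∅ j v = ∑ t ∈ jobsBefore σ j v, p t := by
  unfold prefLoad jobsBefore
  congr 1
  ext t
  simp [and_comm]

theorem IsLPT.sum_jobsBefore_le (hσ : IsLPT p σ) (j : Fin n) (v : Fin m) :
    ∑ t ∈ jobsBefore σ j (σ j), p t ≤ ∑ t ∈ jobsBefore σ j v, p t := by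
  simpa only [prefLoad_empty] using hσ.2 j (notMem_empty j) v

theorem IsCriticalJob.makespan_eq (hj : IsCriticalJob p σ j) :
    makespan p σ = ∑ t ∈ jobsBefore σ j (σ j), p t + p j := by
  rw [← hj.1, mload, ← sum_filter_add_sum_filter_not _ (· < j), filter_filter]
  congr 1
  convert sum_singleton p j
  ext t
  simp only [mem_filter, mem_univ, true_and, mem_singleton, not_lt]
  exact ⟨fun ⟨ht, hjt⟩ => le_antisymm (hj.2 t (ht ▸ hj.1)) hjt, fun ht => ⟨ht ▸ rfl, ht.ge⟩⟩

end JobsBefore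

theorem two_mul_card_add_one_le_sum {ι : Type*} [DecidableEq ι] {s : Finset ι} {f : ι → ℕ}
    (hf : ∀ v ∈ s, 2 ≤ f v) {i : ι} (hi : i ∈ s) (h3 : 3 ≤ f i) :
    2 * #s + 1 ≤ ∑ v ∈ s, f v := by
  have h2 : #(s.erase i) • 2 ≤ ∑ v ∈ s.erase i, f v :=
    card_nsmul_le_sum _ _ _ fun v hv => hf v (mem_of_mem_erase hv)
  rw [← add_sum_erase s f hi]
  rw [card_erase_of_mem hi, smul_eq_mul] at h2
  have := card_pos.2 ⟨i, hi⟩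
  omega

section LoneMachines

variable {m n : ℕ} {p : Fin n → ℝ} {σ τ : Fin n → Fin m} {j : Fin n} {C L : ℝ}

def loneMachines (σ : Fin n → Fin m) (j : Fin n) : Finset (Fin m) :=
  {v | #(jobsBefore σ j v) = 1}

theorem card_jobsBeforeOn_loneMachines :
    #(jobsBeforeOn σ j (loneMachines σ j)) = #(loneMachines σ j) := by
  rw [card_jobsBeforeOn, card_eq_sum_ones]
  exact sum_congr rfl fun v hv => (mem_filter.1 hv).2

theorem two_mul_card_add_one_le_card_jobsBeforeOn_compl
    (hne : ∀ v, (jobsBefore σ j v).Nonempty) {i : Fin m} (hi : 3 ≤ #(jobsBefore σ j i)) :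
    2 * #(loneMachines σ j)ᶜ + 1 ≤ #(jobsBeforeOn σ j (loneMachines σ j)ᶜ) := by
  rw [card_jobsBeforeOn]
  refine two_mul_card_add_one_le_sum (fun v hv => ?_) (i := i) ?_ hi
  · have := (hne v).card_pos
    have : #(jobsBefore σ j v) ≠ 1 := by simpa [loneMachines] using hv
    omega
  · simp only [loneMachines, mem_compl, mem_filter, mem_univ, true_and]
    omega

theorem card_loneMachines_pos (hj : j.val ≤ 2 * m)
    (hne : ∀ v, (jobsBefore σ j v).Nonempty) {i : Fin m} (hi : 3 ≤ #(jobsBefore σ j i)) :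
    0 < #(loneMachines σ j) := by
  have hsplit := sum_add_sum_compl (loneMachines σ j) fun v => #(jobsBefore σ j v)
  rw [sum_card_jobsBefore, ← card_jobsBeforeOn, ← card_jobsBeforeOn,
    card_jobsBeforeOn_loneMachines] at hsplit
  have := two_mul_card_add_one_le_card_jobsBeforeOn_compl hne hi
  have := card_compl (loneMachines σ j)
  have := card_le_univ (loneMachines σ j)
  simp only [Fintype.card_fin] at *
  omega

theorem jobsBefore_eq_singleton {t : Fin n} (ht : t ∈ jobsBeforeOn σ j (loneMachines σ j)) :
    jobsBefore σ j (σ t) = {t} := by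
  simp only [jobsBeforeOn, loneMachines, mem_filter, mem_univ, true_and] at ht
  obtain ⟨a, ha⟩ := card_eq_one.1 ht.2
  have hta : t ∈ jobsBefore σ j (σ t) := mem_filter.2 ⟨mem_univ t, rfl, ht.1⟩
  rw [ha, mem_singleton] at hta
  subst hta
  exact ha

theorem add_le_of_lone_shared (hp : SortedNonneg p) (hC : ∀ M, mload p τ M ≤ C)
    (hL : ∀ v, L ≤ ∑ t ∈ jobsBefore σ j v, p t) {t u : Fin n}
    (ht : t ∈ jobsBeforeOn σ j (loneMachines σ j)) (hu : u ≤ j) (hτ : τ u = τ t)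
    (hut : u ≠ t) : L + p j ≤ C :=
  calc L + p j ≤ p t + p u := by
        gcongr
        · simpa [jobsBefore_eq_singleton ht] using hL (σ t)
        · exact hp.1 u j hu
    _ = ∑ k ∈ {t, u}, p k := (sum_pair hut.symm).symm
    _ ≤ mload p τ (τ t) := sum_le_mload hp.2 (by simp [hτ])
    _ ≤ C := hC _

theorem exists_card_mul_add_le (hp : SortedNonneg p) (hC : ∀ M, mload p τ M ≤ C)
    (hL : ∀ v, L ≤ ∑ t ∈ jobsBefore σ j v, p t) (hj : j.val ≤ 2 * m)
    (hne : ∀ v, (jobsBefore σ j v).Nonempty) {i : Fin m} (hi : 3 ≤ #(jobsBefore σ j i))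
    (hlone : ∀ t ∈ jobsBeforeOn σ j (loneMachines σ j), ∀ u ≤ j, τ u = τ t → u = t) :
    ∃ c : ℕ, 1 ≤ c ∧ c + 1 ≤ m ∧ c * L + p j ≤ c * C ∧ 3 * p j ≤ C := by
  have hW := card_loneMachines_pos hj hne hi
  have hWc := two_mul_card_add_one_le_card_jobsBeforeOn_compl hne hi
  set W := loneMachines σ j
  set T := jobsBeforeOn σ j W
  have hjW : j ∉ jobsBeforeOn σ j Wᶜ := by simp [jobsBeforeOn]
  set R := insert j (jobsBeforeOn σ j Wᶜ)
  set B := (T.image τ)ᶜ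
  have hRj : ∀ u ∈ R, u ≤ j := by
    simp only [R, jobsBeforeOn, mem_insert, mem_filter]
    rintro u (rfl | ⟨-, hu, -⟩) <;> order
  have hRB : ∀ u ∈ R, τ u ∈ B := by
    intro u hu
    simp only [B, mem_compl, mem_image, not_exists, not_and]
    intro t ht hτ
    obtain rfl := hlone t ht u (hRj u hu) hτ.symm
    simp only [T, R, jobsBeforeOn, mem_insert, mem_filter, mem_compl] at ht hu
    rcases hu with rfl | hu
    · exact lt_irrefl _ ht.2.1
    · exact hu.2.2 ht.2.2
  have hB : #B = #Wᶜ := by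
    rw [card_compl, card_compl, card_image_of_injOn, card_jobsBeforeOn_loneMachines]
    intro t ht t' ht' hτ
    exact hlone t' ht' t (mem_filter.1 ht).2.1.le hτ
  refine ⟨#Wᶜ, card_pos.2 ⟨i, ?_⟩, ?_, ?_, ?_⟩
  · simp only [W, loneMachines, mem_compl, mem_filter, mem_univ, true_and]
    omega
  · have := card_le_univ W
    rw [Fintype.card_fin] at this
    rw [card_compl, Fintype.card_fin]
    omega
  · calc #Wᶜ * L + p j ≤ p j + ∑ v ∈ Wᶜ, ∑ t ∈ jobsBefore σ j v, p t := by
          rw [← nsmul_eq_mul, add_comm]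
          gcongr
          exact card_nsmul_le_sum _ _ _ fun v _ => hL v
      _ = ∑ u ∈ R, p u := by rw [sum_insert hjW, sum_jobsBeforeOn]
      _ ≤ #Wᶜ * C := hB ▸ sum_le_card_mul hp.2 hC hRB
  · refine three_mul_le_of_mul_two_lt_card hp.2 hC hRB ?_ fun u hu => hp.1 u j (hRj u hu)
    rw [card_insert_of_notMem hjW, hB]
    omega

end LoneMachines

theorem add_le_ratio_mul_of_add_le {m : ℕ} (hm : 2 ≤ m) {L x C : ℝ} (hC : 0 ≤ C)
    (h : L + x ≤ C) : L + x ≤ (4 / 3 - 1 / (3 * ((m : ℝ) - 1))) * C := by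
  have hm' : (2 : ℝ) ≤ m := by exact_mod_cast hm
  have : 1 / (3 * ((m : ℝ) - 1)) ≤ 1 / 3 := by
    gcongr
    linarith
  nlinarith

theorem add_le_ratio_mul_of_mul_add_le {m c : ℕ} (hc : 1 ≤ c) (hcm : c + 1 ≤ m) {L x C : ℝ}
    (hx : 0 ≤ x) (h : c * L + x ≤ c * C) (h3 : 3 * x ≤ C) :
    L + x ≤ (4 / 3 - 1 / (3 * ((m : ℝ) - 1))) * C := by
  set k : ℝ := (m : ℝ) - 1
  have hc' : (1 : ℝ) ≤ c := by exact_mod_cast hc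
  have hck : (c : ℝ) ≤ k := by
    have : ((c + 1 : ℕ) : ℝ) ≤ m := by exact_mod_cast hcm
    push_cast at this
    linarith
  have hk : 0 < k := by linarith
  have hLk : L + x / k ≤ C :=
    calc L + x / k ≤ L + x / c := by gcongr
      _ = (c * L + x) / c := by field_simp
      _ ≤ c * C / c := by gcongr
      _ = C := by field_simp
  have h1k : 0 ≤ 1 - 1 / k := by
    rw [sub_nonneg, div_le_one hk]
    linarith
  have hx3 : x * (1 - 1 / k) ≤ C / 3 * (1 - 1 / k) := by gcongr; linarith
  calc L + x = (L + x / k) + x * (1 - 1 / k) := by field_simp; ring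
    _ ≤ C + C / 3 * (1 - 1 / k) := add_le_add hLk hx3
    _ = (4 / 3 - 1 / (3 * k)) * C := by field_simp; ring

/-- Proposition 8: for `n = 2m+1` jobs, if an LPT schedule assigns at
least three jobs, all with indices smaller than the critical job `j'`, to some
machine, then `C^LPT ≤ (4/3 − 1/(3(m−1))) · C*`. -/
theorem stmt5 {m : ℕ} (hm : 2 ≤ m)
    (p : Fin (2 * m + 1) → ℝ) (hp : SortedNonneg p)
    (σ : Fin (2 * m + 1) → Fin m) (hσ : IsLPT p σ)
    (j' : Fin (2 * m + 1)) (hj' : IsCriticalJob p σ j')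
    (i : Fin m) (hi : 3 ≤ (Finset.univ.filter (fun t => σ t = i ∧ t < j')).card) :
    makespan p σ ≤ (4 / 3 - 1 / (3 * ((m : ℝ) - 1))) * optMakespan m p := by
  have : NeZero m := ⟨by omega⟩
  obtain ⟨τ, hτ⟩ := exists_forall_mload_le_optMakespan (m := m) p
  have hL := hσ.sum_jobsBefore_le j'
  have hjC := le_of_forall_mload_le hp.2 hτ j'
  have hC : 0 ≤ optMakespan m p := (hp.2 j').trans hjC
  rw [hj'.makespan_eq]
  by_cases hempty : ∃ v, jobsBefore σ j' v = ∅
  · obtain ⟨v, hv⟩ := hempty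
    have hL0 : ∑ t ∈ jobsBefore σ j' (σ j'), p t ≤ 0 := by simpa [hv] using hL v
    exact add_le_ratio_mul_of_add_le hm hC (by linarith)
  by_cases hshared :
      ∃ t ∈ jobsBeforeOn σ j' (loneMachines σ j'), ∃ u ≤ j', τ u = τ t ∧ u ≠ t
  · obtain ⟨t, ht, u, hu, hτu, hut⟩ := hshared
    exact add_le_ratio_mul_of_add_le hm hC
      (add_le_of_lone_shared hp hτ hL ht hu hτu hut)
  push Not at hempty hshared
  obtain ⟨c, hc, hcm, hcL, h3⟩ := exists_card_mul_add_le hp hτ hL (by omega)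
    hempty hi hshared
  exact add_le_ratio_mul_of_mul_add_le hc hcm (hp.2 j') hcL h3
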